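/- arXiv:2507.05473 — 5 statements merged into one kernel-verified Lean document; each statement's English description precedes it below -/
import Mathlib

section
/- The chromatic polynomial of the complete bipartite graph K_{q,q} evaluated at n equals the sum over all set partitions Π of a q-element set of the product (n)_{|Π|} · (n − |Π|)^q, where (n)_i = n(n−1)···(n−i+1) is the falling factorial. -/
/-!
A proper colouring `f` of `K_{α,γ}` is a pair of maps `g := f ∘ inl` and `h := f ∘ inr` such that
`h` avoids the image of `g`, which leaves `(n - |g(α)|) ^ |γ|` choices for `h`. Grouping the maps
`g` by their kernel partition `P`, the maps with kernel `P` correspond to injective colourings of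
the parts of `P`, of which there are `(n)_{|P|}`, and `|g(α)| = |P|`.
-/

open Finset

namespace Finpartition

section

variable {α : Type*} [DecidableEq α]

lemma parts_eq_image_part {s : Finset α} (P : Finpartition s) : P.parts = s.image P.part := by
  refine Subset.antisymm (fun t ht => ?_) (image_subset_iff.2 fun a ha => P.part_mem.2 ha)
  obtain ⟨a, ha, rfl⟩ := P.part_surjOn ht
  exact mem_image_of_mem _ ha

lemma ext_part {s : Finset α} {P Q : Finpartition s} (h : ∀ a ∈ s, P.part a = Q.part a) :
    P = Q := by
  ext1
  rw [parts_eq_image_part, parts_eq_image_part, image_congr h]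

variable [Fintype α]

def partMap (P : Finpartition (univ : Finset α)) (a : α) : P.parts :=
  ⟨P.part a, P.part_mem.2 (mem_univ a)⟩

lemma partMap_eq_partMap_iff {P : Finpartition (univ : Finset α)} {a b : α} :
    P.partMap a = P.partMap b ↔ b ∈ P.part a := by
  rw [partMap, partMap, Subtype.mk.injEq, P.mem_part_iff_part_eq_part (mem_univ b) (mem_univ a),
    eq_comm]

lemma partMap_surjective (P : Finpartition (univ : Finset α)) :
    Function.Surjective P.partMap := by
  rintro ⟨t, ht⟩
  obtain ⟨a, -, rfl⟩ := P.part_surjOn ht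
  exact ⟨a, rfl⟩

end

variable {α β : Type*} [Fintype α] [DecidableEq α] [DecidableEq β]

def ker (g : α → β) : Finpartition (univ : Finset α) :=
  letI : DecidableRel (Setoid.ker g).r := fun a b => decEq (g a) (g b)
  ofSetoid (Setoid.ker g)

lemma mem_part_ker {g : α → β} {a b : α} : b ∈ (ker g).part a ↔ g a = g b :=
  mem_part_ofSetoid_iff_rel

lemma ker_eq_iff {g : α → β} {P : Finpartition (univ : Finset α)} :
    ker g = P ↔ ∀ a b, g a = g b ↔ P.partMap a = P.partMap b := by
  simp only [partMap_eq_partMap_iff]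
  refine ⟨fun h a b => h ▸ mem_part_ker.symm, fun h => ext_part fun a _ => ?_⟩
  ext b
  rw [mem_part_ker, h]

lemma ker_comp_partMap (P : Finpartition (univ : Finset α)) (e : P.parts ↪ β) :
    ker (e ∘ P.partMap) = P :=
  ker_eq_iff.2 fun _ _ => e.apply_eq_iff_eq _ _

lemma exists_embedding_comp_partMap {g : α → β} {P : Finpartition (univ : Finset α)}
    (h : ker g = P) : ∃ e : P.parts ↪ β, e ∘ P.partMap = g := by
  choose r hr using P.partMap_surjective
  have hg (a : α) : g (r (P.partMap a)) = g a := (ker_eq_iff.1 h _ _).2 (hr _)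
  refine ⟨⟨g ∘ r, fun t u htu => ?_⟩, funext hg⟩
  rw [← hr t, ← hr u]
  exact (ker_eq_iff.1 h _ _).1 htu

noncomputable def embeddingEquivKerEq (P : Finpartition (univ : Finset α)) :
    (P.parts ↪ β) ≃ {g : α → β // ker g = P} :=
  Equiv.ofBijective (fun e => ⟨e ∘ P.partMap, ker_comp_partMap P e⟩)
    ⟨fun _ _ h => DFunLike.coe_injective <|
        P.partMap_surjective.injective_comp_right (congrArg Subtype.val h),
      fun g => (exists_embedding_comp_partMap g.2).imp fun _ he => Subtype.ext he⟩

lemma card_subtype_ker_eq [Fintype β] (P : Finpartition (univ : Finset α)) :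
    Nat.card {g : α → β // ker g = P} = (Fintype.card β).descFactorial #P.parts := by
  rw [← Nat.card_congr (embeddingEquivKerEq P), Nat.card_eq_fintype_card,
    Fintype.card_embedding_eq, Fintype.card_coe]

lemma card_parts_ker (g : α → β) : #(ker g).parts = #(univ.image g) := by
  obtain ⟨e, he⟩ := exists_embedding_comp_partMap (rfl : ker g = ker g)
  have himage : univ.image (e ∘ (ker g).partMap) = univ.map e := by
    rw [← image_image, image_univ_of_surjective (partMap_surjective _), map_eq_image]
  rw [he] at himage
  rw [himage, card_map, card_univ, Fintype.card_coe]

end Finpartition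

open Finpartition

lemma card_fun_avoiding_range {α β γ : Type*} [Fintype α] [Fintype β] [DecidableEq β]
    [Fintype γ] (g : α → β) :
    Nat.card {h : γ → β // ∀ a c, g a ≠ h c} =
      (Fintype.card β - #(univ.image g)) ^ Fintype.card γ := by
  classical
  have hfilter : ({h : γ → β | ∀ a c, g a ≠ h c} : Finset (γ → β)) =
      Fintype.piFinset fun _ => (univ.image g)ᶜ := by
    ext h
    simp [forall_comm (α := α)]
  rw [Nat.card_eq_fintype_card, Fintype.card_subtype, hfilter, Fintype.card_piFinset, prod_const,
    card_compl, card_univ]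

lemma completeBipartiteGraph_forall_adj_ne_iff {α β γ : Type*} {f : α ⊕ γ → β} :
    (∀ u v, (completeBipartiteGraph α γ).Adj u v → f u ≠ f v) ↔
      ∀ a c, f (.inl a) ≠ f (.inr c) := by
  refine ⟨fun h a c => h _ _ (by simp), ?_⟩
  rintro h (a | c) (a' | c') hadj <;> simp at hadj
  · exact h a c'
  · exact (h a' c).symm

def completeBipartiteProperMapEquiv (α β γ : Type*) :
    {f : α ⊕ γ → β // ∀ u v, (completeBipartiteGraph α γ).Adj u v → f u ≠ f v} ≃
      Σ g : α → β, {h : γ → β // ∀ a c, g a ≠ h c} :=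
  (Equiv.subtypeEquiv (Equiv.sumArrowEquivProdArrow α γ β) fun _ =>
      completeBipartiteGraph_forall_adj_ne_iff).trans
    (Equiv.subtypeProdEquivSigmaSubtype fun (g : α → β) (h : γ → β) => ∀ a c, g a ≠ h c)

theorem card_completeBipartiteGraph_colorings {α β γ : Type*} [Fintype α] [DecidableEq α]
    [Fintype β] [DecidableEq β] [Fintype γ] :
    Nat.card {f : α ⊕ γ → β // ∀ u v, (completeBipartiteGraph α γ).Adj u v → f u ≠ f v} =
      ∑ P : Finpartition (univ : Finset α),
        (Fintype.card β).descFactorial #P.parts * (Fintype.card β - #P.parts) ^ Fintype.card γ := by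
  rw [Nat.card_congr (completeBipartiteProperMapEquiv α β γ), Nat.card_sigma]
  simp_rw [card_fun_avoiding_range, ← card_parts_ker]
  rw [← Fintype.sum_fiberwise' ker fun P => (Fintype.card β - #P.parts) ^ Fintype.card γ]
  refine sum_congr rfl fun P _ => ?_
  rw [sum_const, card_univ, ← Nat.card_eq_fintype_card, card_subtype_ker_eq, smul_eq_mul]

-- For `n < k` both sides vanish, so the truncated subtraction `n - k` on the left is harmless.
lemma cast_descFactorial_mul_sub_pow (n k m : ℕ) :
    ((n.descFactorial k * (n - k) ^ m : ℕ) : ℤ) =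
      (descPochhammer ℤ k).eval (n : ℤ) * ((n : ℤ) - k) ^ m := by
  rw [descPochhammer_eval_eq_descFactorial]
  rcases le_or_gt k n with hkn | hnk
  · push_cast [hkn]
    rfl
  · rw [Nat.descFactorial_eq_zero_iff_lt.2 hnk]
    simp

/-- The chromatic polynomial of `K_{q,q}` evaluated at `n` equals the sum over all set
partitions `Π` of a `q`-element set of `(n)_{|Π|} · (n - |Π|)^q`. -/
theorem stmt4 (q n : ℕ) :
    (Nat.card {f : Fin q ⊕ Fin q → Fin n //
        ∀ u v, (completeBipartiteGraph (Fin q) (Fin q)).Adj u v → f u ≠ f v} : ℤ)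
      = ∑ P : Finpartition (Finset.univ : Finset (Fin q)),
          (descPochhammer ℤ P.parts.card).eval (n : ℤ) * ((n : ℤ) - P.parts.card) ^ q := by
  rw [card_completeBipartiteGraph_colorings, Fintype.card_fin, Fintype.card_fin, Nat.cast_sum]
  simp_rw [cast_descFactorial_mul_sub_pow]
end

section
/- The number of proper n-colorings of the Cartesian product graph K_q × P_2 equals (n)_q · Σ_{a=0}^{q} (−1)^a C(q,a) (n−a)_{q−a}, where (m)_k denotes the falling factorial m(m−1)···(m−k+1). -/
/-!
A proper colouring of `K_q □ P_2` is a pair of injective colourings `g, h` of the two copies of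
`K_q` with `g v ≠ h v` for every `v`. For fixed `g`, inclusion–exclusion over the set `A` of
vertices where `h` agrees with `g` counts the admissible `h`: the embeddings extending `g|_A` are
the embeddings of the `q - |A|` remaining vertices into the `n - |A|` unused colours.
-/

open Finset Function SimpleGraph

section Coloring

variable {α β : Type*}

theorem forall_boxProd_top_pathGraph_two_adj_ne_iff (f : α × Fin 2 → β) :
    (∀ u v, ((⊤ : SimpleGraph α) □ pathGraph 2).Adj u v → f u ≠ f v) ↔
      (Injective fun v => f (v, 0)) ∧ (Injective fun v => f (v, 1)) ∧
        ∀ v, f (v, 0) ≠ f (v, 1) := by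
  simp only [pathGraph_two_eq_top, boxProd_adj, top_adj]
  constructor
  · intro h
    refine ⟨fun a b hab => ?_, fun a b hab => ?_, fun v => h _ _ (by simp)⟩ <;>
      exact not_not.1 fun hne => h _ _ (by simpa using hne) hab
  · rintro ⟨h0, h1, h⟩ ⟨a, i⟩ ⟨b, j⟩ (⟨hab, rfl⟩ | ⟨hij, rfl⟩)
    · fin_cases i
      exacts [h0.ne hab, h1.ne hab]
    · fin_cases i <;> fin_cases j
      exacts [absurd rfl hij, h a, (h a).symm, absurd rfl hij]

def boxProdTopPathGraphTwoColoringEquiv :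
    {f : α × Fin 2 → β // ∀ u v, ((⊤ : SimpleGraph α) □ pathGraph 2).Adj u v → f u ≠ f v} ≃
      {p : (α ↪ β) × (α ↪ β) // ∀ v, p.1 v ≠ p.2 v} where
  toFun f :=
    have hf := (forall_boxProd_top_pathGraph_two_adj_ne_iff f.1).1 f.2
    ⟨(⟨_, hf.1⟩, ⟨_, hf.2.1⟩), hf.2.2⟩
  invFun p := ⟨fun x => ![p.1.1 x.1, p.1.2 x.1] x.2,
    (forall_boxProd_top_pathGraph_two_adj_ne_iff _).2 ⟨p.1.1.injective, p.1.2.injective, p.2⟩⟩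
  left_inv f := by
    ext ⟨v, i⟩
    fin_cases i <;> rfl
  right_inv p := rfl

end Coloring

section Embedding

variable {α β : Type*} [DecidableEq α]

def embeddingExtensionEquiv (g : α ↪ β) (A : Finset α) :
    {h : α ↪ β // ∀ v ∈ A, g v = h v} ≃ ({v // v ∉ A} ↪ {c // c ∉ A.map g}) where
  toFun h :=
    ⟨fun v => ⟨h.1 v, fun hv => by
      obtain ⟨w, hw, hgw⟩ := mem_map.1 hv
      rw [h.2 w hw, h.1.apply_eq_iff_eq] at hgw
      exact v.2 (hgw ▸ hw)⟩,
     fun v w hvw => Subtype.ext (h.1.injective (congrArg Subtype.val hvw))⟩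
  invFun k :=
    ⟨⟨fun v => if hv : v ∈ A then g v else k ⟨v, hv⟩, by
      intro v w hvw
      by_cases hv : v ∈ A <;> by_cases hw : w ∈ A <;> simp only [hv, hw, dif_pos] at hvw
      · exact g.injective hvw
      · exact absurd (mem_map_of_mem g hv) (hvw ▸ (k ⟨w, hw⟩).2)
      · exact absurd (mem_map_of_mem g hw) (hvw ▸ (k ⟨v, hv⟩).2)
      · exact congrArg Subtype.val (k.injective (Subtype.ext hvw))⟩,
     fun v hv => (dif_pos hv : (if hv : v ∈ A then g v else _) = g v).symm⟩
  left_inv h := by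
    ext v
    by_cases hv : v ∈ A
    · simp [hv, h.2 v hv]
    · exact dif_neg hv
  right_inv k := by
    ext v
    exact dif_neg v.2

variable [Fintype α] [Fintype β] [DecidableEq β]

theorem card_embedding_extension (g : α ↪ β) (A : Finset α) :
    Fintype.card {h : α ↪ β // ∀ v ∈ A, g v = h v} =
      (Fintype.card β - #A).descFactorial (Fintype.card α - #A) := by
  rw [Fintype.card_congr (embeddingExtensionEquiv g A), Fintype.card_embedding_eq,
    Fintype.card_subtype_compl, Fintype.card_subtype_compl, Fintype.card_coe, Fintype.card_coe,
    card_map]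

theorem card_embedding_forall_ne (g : α ↪ β) :
    (Nat.card {h : α ↪ β // ∀ v, g v ≠ h v} : ℤ) =
      ∑ a ∈ range (Fintype.card α + 1), (-1) ^ a * (Fintype.card α).choose a *
        ((Fintype.card β - a).descFactorial (Fintype.card α - a) : ℤ) := by
  let agree (v : α) : Finset (α ↪ β) := {h | g v = h v}
  have hdisagree :
      Nat.card {h : α ↪ β // ∀ v, g v ≠ h v} = #(univ.inf fun v => (agree v)ᶜ) := by
    rw [Nat.card_eq_fintype_card, Fintype.card_subtype]
    congr 1
    ext h
    simp [agree, mem_inf]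
  have hagree (A : Finset α) :
      #(A.inf agree) = Fintype.card {h : α ↪ β // ∀ v ∈ A, g v = h v} := by
    rw [Fintype.card_subtype]
    congr 1
    ext h
    simp [agree, mem_inf]
  simp only [hdisagree, inclusion_exclusion_card_inf_compl, hagree, card_embedding_extension]
  rw [sum_powerset_apply_card (fun a => (-1 : ℤ) ^ a *
    ((Fintype.card β - a).descFactorial (Fintype.card α - a) : ℤ)), card_univ]
  refine sum_congr rfl fun a _ => ?_
  rw [nsmul_eq_mul]
  ring

end Embedding

theorem Nat.cast_card_subtype_prod_eq_mul {γ δ R : Type*} [Fintype γ] [Finite δ]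
    [NonAssocSemiring R] (r : γ → δ → Prop) (d : R) (hr : ∀ x, (Nat.card {y // r x y} : R) = d) :
    (Nat.card {p : γ × δ // r p.1 p.2} : R) = Nat.card γ * d := by
  rw [Nat.card_congr (Equiv.subtypeProdEquivSigmaSubtype r), Nat.card_sigma, Nat.cast_sum]
  simp only [hr, sum_const, Finset.card_univ, nsmul_eq_mul, Nat.card_eq_fintype_card]

/-- The number of proper `n`-colorings of the Cartesian (box) product `K_q × P_2` equals
`(n)_q · Σ_{a=0}^{q} (-1)^a C(q,a) (n-a)_{q-a}`. -/
theorem stmt5 (q n : ℕ) :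
    (Nat.card {f : Fin q × Fin 2 → Fin n //
        ∀ u v, ((⊤ : SimpleGraph (Fin q)).boxProd (SimpleGraph.pathGraph 2)).Adj u v →
          f u ≠ f v} : ℤ)
      = (descPochhammer ℤ q).eval (n : ℤ) *
          ∑ a ∈ Finset.range (q + 1),
            (-1 : ℤ) ^ a * (q.choose a : ℤ) * (descPochhammer ℤ (q - a)).eval ((n : ℤ) - a) := by
  rw [Nat.card_congr boxProdTopPathGraphTwoColoringEquiv,
    Nat.cast_card_subtype_prod_eq_mul _ _ card_embedding_forall_ne, Nat.card_eq_fintype_card,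
    Fintype.card_embedding_eq]
  simp only [Fintype.card_fin]
  -- `(n : ℤ) - a` is the natural number `n - a` only for `a ≤ n`; for `q > n` both sides vanish.
  rcases le_or_gt q n with hqn | hnq
  · rw [descPochhammer_eval_eq_descFactorial]
    congr 1
    refine sum_congr rfl fun a ha => ?_
    rw [← Nat.cast_sub (by grind), descPochhammer_eval_eq_descFactorial]
  · rw [Nat.descFactorial_eq_zero_iff_lt.2 hnq, descPochhammer_eval_coe_nat_of_lt hnq]
    simp
end

section
/- More generally, the chromatic polynomial of K_q × P_m (for m ≥ 1) equals (n)_q · (g_q(n))^{m−1}, where g_q(n) = Σ_{a=0}^{q} (−1)^a C(q,a) (n−a)_{q−a}. -/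
/-!
Reading a colouring of `K_q □ P_m` row by row, it is a sequence of `m` injections
`Fin q ↪ Fin n` in which consecutive injections disagree at every point. By inclusion–exclusion
over the set of agreement points, the injections disagreeing everywhere with a fixed injection
number `g_q(n)`, whatever the fixed one is; so the first row can be chosen in `(n)_q` ways and
each further row in `g_q(n)` ways.
-/

open Finset Function SimpleGraph

theorem Function.Embedding.card_eqOn {ι β : Type*} [Fintype ι] [Fintype β]
    (f : ι ↪ β) (s : Finset ι) :
    Nat.card {g : ι ↪ β // ∀ i ∈ s, g i = f i} =
      (Fintype.card β - #s).descFactorial (Fintype.card ι - #s) := by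
  classical
  let e : (ι ↪ β) ≃ Σ h : s ↪ β, {i // i ∉ s} ↪ ↥(Set.range h)ᶜ :=
    (Equiv.embeddingCongr (Equiv.sumCompl (· ∈ s)).symm (Equiv.refl β)).trans
      Equiv.sumEmbeddingEquivSigmaEmbeddingRestricted
  have hagree : ∀ g : ι ↪ β, (∀ i ∈ s, g i = f i) ↔ (e g).1 = (e f).1 := fun g ↦ by
    simp only [DFunLike.ext_iff, Subtype.forall]
    rfl
  rw [Nat.card_congr ((Equiv.subtypeEquiv e hagree).trans (Equiv.sigmaSubtype _)),
    Nat.card_eq_fintype_card, Fintype.card_embedding_eq, Fintype.card_compl_set,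
    Fintype.card_range, Fintype.card_coe, Fintype.card_subtype_compl, Fintype.card_coe]

theorem Function.Embedding.card_forall_ne {ι β : Type*} [Fintype ι] [Fintype β] (f : ι ↪ β) :
    (Nat.card {g : ι ↪ β // ∀ i, g i ≠ f i} : ℤ) =
      ∑ a ∈ range (Fintype.card ι + 1), (-1) ^ a * ((Fintype.card ι).choose a : ℤ) *
        (descPochhammer ℤ (Fintype.card ι - a)).eval ((Fintype.card β : ℤ) - a) := by
  classical
  let S (i : ι) : Finset (ι ↪ β) := {g | g i = f i}
  have hS (t : Finset ι) :
      #(t.inf S) = (Fintype.card β - #t).descFactorial (Fintype.card ι - #t) := by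
    rw [← f.card_eqOn t, Nat.card_eq_fintype_card, Fintype.card_subtype]
    congr 1
    ext g
    simp [S, mem_inf]
  have hιβ : Fintype.card ι ≤ Fintype.card β := Fintype.card_le_of_embedding f
  calc (Nat.card {g : ι ↪ β // ∀ i, g i ≠ f i} : ℤ)
      = #(univ.inf fun i ↦ (S i)ᶜ) := by
        rw [Nat.card_eq_fintype_card, Fintype.card_subtype]
        congr 2
        ext g
        simp [S, mem_inf]
    _ = _ := by
        rw [inclusion_exclusion_card_inf_compl]
        simp only [hS]
        rw [sum_powerset_apply_card (fun a ↦ (-1 : ℤ) ^ a *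
          ((Fintype.card β - a).descFactorial (Fintype.card ι - a) : ℤ)), card_univ]
        refine sum_congr rfl fun a ha ↦ ?_
        have haβ : a ≤ Fintype.card β := (Nat.lt_succ_iff.1 (mem_range.1 ha)).trans hιβ
        rw [nsmul_eq_mul, ← Nat.cast_sub haβ, descPochhammer_eval_eq_descFactorial]
        ring

theorem Nat.card_chain_eq_mul_pow {R α : Type*} [Semiring R] [Finite α] (r : α → α → Prop)
    (d : R) (hr : ∀ a, (Nat.card {b // r a b} : R) = d) (k : ℕ) :
    (Nat.card {F : Fin (k + 1) → α // ∀ j : Fin k, r (F j.castSucc) (F j.succ)} : R) =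
      Nat.card α * d ^ k := by
  induction k with
  | zero =>
    rw [Nat.card_congr ((Equiv.subtypeUnivEquiv fun F ↦ finZeroElim).trans
      (Equiv.funUnique (Fin 1) α)), pow_zero, mul_one]
  | succ k ih =>
    let e : {F : Fin (k + 2) → α // ∀ j : Fin (k + 1), r (F j.castSucc) (F j.succ)} ≃
        Σ F : {F : Fin (k + 1) → α // ∀ j : Fin k, r (F j.castSucc) (F j.succ)},
          {b // r (F.1 (Fin.last k)) b} :=
      { toFun F := ⟨⟨Fin.init F.1, fun j ↦ by simpa [Fin.init] using F.2 j.castSucc⟩,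
          ⟨F.1 (Fin.last _), by simpa [Fin.init] using F.2 (Fin.last k)⟩⟩
        invFun F := ⟨Fin.snoc F.1.1 F.2.1, Fin.forall_fin_succ'.2
          ⟨fun j ↦ by simpa only [Fin.succ_castSucc, Fin.snoc_castSucc] using F.1.2 j,
            by simpa using F.2.2⟩⟩
        left_inv F := by simp
        right_inv F := Sigma.subtype_ext (Subtype.ext (Fin.init_snoc (α := fun _ ↦ α) ..))
          (Fin.snoc_last (α := fun _ ↦ α) ..) }
    classical
    have := Fintype.ofFinite α
    rw [Nat.card_congr e, Nat.card_sigma, Nat.cast_sum]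
    simp_rw [hr]
    rw [sum_const, Finset.card_univ, ← Nat.card_eq_fintype_card, nsmul_eq_mul, ih, pow_succ,
      mul_assoc]

theorem SimpleGraph.pathGraph_forall_adj_iff {α : Type*} {r : α → α → Prop}
    (hr : ∀ a b, r a b → r b a)
    {k : ℕ} (F : Fin (k + 1) → α) :
    (∀ u v, (pathGraph (k + 1)).Adj u v → r (F u) (F v)) ↔
      ∀ j : Fin k, r (F j.castSucc) (F j.succ) := by
  refine ⟨fun h j ↦ h _ _ (pathGraph_adj.2 (Or.inl rfl)), fun h u v huv ↦ ?_⟩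
  rcases pathGraph_adj.1 huv with huv | huv
  · obtain ⟨j, rfl, rfl⟩ : ∃ j : Fin k, u = j.castSucc ∧ v = j.succ :=
      ⟨⟨u, by omega⟩, rfl, Fin.ext huv.symm⟩
    exact h j
  · obtain ⟨j, rfl, rfl⟩ : ∃ j : Fin k, v = j.castSucc ∧ u = j.succ :=
      ⟨⟨v, by omega⟩, rfl, Fin.ext huv.symm⟩
    exact hr _ _ (h j)

theorem SimpleGraph.top_boxProd_forall_adj_ne_iff {ι W β : Type*} (H : SimpleGraph W)
    (f : ι × W → β) :
    (∀ u v, ((⊤ : SimpleGraph ι).boxProd H).Adj u v → f u ≠ f v) ↔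
      (∀ w, Injective fun i ↦ f (i, w)) ∧ ∀ w w', H.Adj w w' → ∀ i, f (i, w) ≠ f (i, w') := by
  refine ⟨fun h ↦ ⟨fun w i i' hii' ↦ ?_,
    fun w w' hww' i ↦ h _ _ (boxProd_adj.2 (.inr ⟨hww', rfl⟩))⟩,
    fun ⟨hinj, hadj⟩ ⟨i, w⟩ ⟨i', w'⟩ huv ↦ ?_⟩
  · by_contra hne
    exact h (i, w) (i', w) (boxProd_adj.2 (.inl ⟨hne, rfl⟩)) hii'
  · rcases boxProd_adj.1 huv with ⟨hii', rfl : w = w'⟩ | ⟨hww', rfl : i = i'⟩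
    · exact (hinj w).ne hii'
    · exact hadj w w' hww' i

def SimpleGraph.topBoxProdColoringEquiv {ι W β : Type*} (H : SimpleGraph W) :
    {f : ι × W → β // ∀ u v, ((⊤ : SimpleGraph ι).boxProd H).Adj u v → f u ≠ f v} ≃
      {F : W → ι ↪ β // ∀ w w', H.Adj w w' → ∀ i, F w i ≠ F w' i} where
  toFun f := ⟨fun w ↦ ⟨fun i ↦ f.1 (i, w), ((top_boxProd_forall_adj_ne_iff H f.1).1 f.2).1 w⟩,
    ((top_boxProd_forall_adj_ne_iff H f.1).1 f.2).2⟩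
  invFun F :=
    ⟨fun p ↦ F.1 p.2 p.1, (top_boxProd_forall_adj_ne_iff H _).2 ⟨fun w ↦ (F.1 w).2, F.2⟩⟩
  left_inv _ := rfl
  right_inv _ := rfl

/-- The chromatic polynomial of `K_q × P_m` (for `m ≥ 1`) equals `(n)_q · (g_q(n))^{m-1}`,
where `g_q(n) = Σ_{a=0}^{q} (-1)^a C(q,a) (n-a)_{q-a}`. -/
theorem stmt6 (q m n : ℕ) (hm : 1 ≤ m) :
    (Nat.card {f : Fin q × Fin m → Fin n //
        ∀ u v, ((⊤ : SimpleGraph (Fin q)).boxProd (SimpleGraph.pathGraph m)).Adj u v →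
          f u ≠ f v} : ℤ)
      = (descPochhammer ℤ q).eval (n : ℤ) *
          (∑ a ∈ Finset.range (q + 1),
            (-1 : ℤ) ^ a * (q.choose a : ℤ) *
              (descPochhammer ℤ (q - a)).eval ((n : ℤ) - a)) ^ (m - 1) := by
  obtain ⟨k, rfl⟩ := Nat.exists_eq_add_of_le' hm
  have hdisagree (f : Fin q ↪ Fin n) :
      (Nat.card {g : Fin q ↪ Fin n // ∀ i, f i ≠ g i} : ℤ) = ∑ a ∈ Finset.range (q + 1),
        (-1 : ℤ) ^ a * (q.choose a : ℤ) * (descPochhammer ℤ (q - a)).eval ((n : ℤ) - a) := by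
    simpa [ne_comm] using f.card_forall_ne
  rw [Nat.card_congr ((topBoxProdColoringEquiv _).trans (Equiv.subtypeEquivRight fun F ↦
      pathGraph_forall_adj_iff (r := fun f g : Fin q ↪ Fin n ↦ ∀ i, f i ≠ g i)
        (fun _ _ h i ↦ (h i).symm) F)),
    Nat.card_chain_eq_mul_pow _ _ hdisagree, Nat.card_eq_fintype_card, Fintype.card_embedding_eq,
    descPochhammer_eval_eq_descFactorial]
  simp only [Fintype.card_fin, Nat.add_sub_cancel]
end

section
/- Let f_q(n) = c·n^{g(q)} + Σ_{r=1}^{g(q)} c_r(q) n^{g(q)−r} with constant leading coefficient c ≠ 0, and suppose for all r ≤ e the coefficient c_r(q) equals a polynomial φ_r(q). Then for any h(q) ∈ ℕ, and any 1 ≤ r ≤ e, the coefficient of n^{g(q)h(q)−r} in f_q(n)^{h(q)}/c^{h(q)} equals Σ_{s=1}^{r} C(h(q), s) Σ_{ℓ₁+⋯+ℓ_r = s, Σ j·ℓ_j = r} multinomial(s; ℓ₁,...,ℓ_r) · ∏_{j=1}^{r} (φ_j(q)/c)^{ℓ_j}. -/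
/-- The codegree-`r` coefficient of a polynomial regarded as having degree `d`, with the
convention that coefficients of negative powers of `n` are `0`. -/
noncomputable def codegCoeff (p : Polynomial ℚ) (d r : ℕ) : ℚ :=
  if r ≤ d then p.coeff (d - r) else 0

/-!
Reversing `f_q` turns codegree-`r` coefficients of `f_q ^ h` into ordinary `r`-th coefficients
of `P ^ h`, where `P = rev f_q` has constant term `c`. Writing `P = c (1 + Q)` with `Q(0) = 0`,
the binomial theorem gives `(P ^ h)_r / c ^ h = ∑ₛ C(h, s) (Q ^ s)_r`, where only `1 ≤ s ≤ r`
contributes because `X ^ s ∣ Q ^ s`. Finally `(Q ^ s)_r` only depends on `Q_1, …, Q_r`, so `Q` may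
be replaced by `Q_1 X + ⋯ + Q_r X ^ r`, whose `s`-th power is expanded by the multinomial theorem.
-/

open Finset

namespace Polynomial

section CommSemiring

variable {R : Type*} [CommSemiring R]

theorem coeff_pow_eq_zero_of_lt {Q : R[X]} (hQ : Q.coeff 0 = 0) {r s : ℕ} (h : r < s) :
    (Q ^ s).coeff r = 0 :=
  X_pow_dvd_iff.mp (pow_dvd_pow_of_dvd (X_dvd_iff.mpr hQ) s) r h

theorem coeff_one_add_pow {Q : R[X]} (hQ : Q.coeff 0 = 0) {r : ℕ} (hr : 1 ≤ r) (N : ℕ) :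
    ((1 + Q) ^ N).coeff r = ∑ s ∈ Icc 1 r, (N.choose s : R) * (Q ^ s).coeff r := by
  have hvanish : ∀ s ∈ range (N + r + 1), s ∉ Icc 1 r → (N.choose s : R) * (Q ^ s).coeff r = 0 := by
    intro s _ hs
    rcases Nat.eq_zero_or_pos s with rfl | hs0
    · simp [coeff_one, show r ≠ 0 by omega]
    · have hrs : r < s := by simp only [mem_Icc, not_and_or, not_le] at hs; omega
      rw [coeff_pow_eq_zero_of_lt hQ hrs, mul_zero]
  calc ((1 + Q) ^ N).coeff r
      = ∑ s ∈ range (N + 1), (N.choose s : R) * (Q ^ s).coeff r := by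
        simp only [add_comm (1 : R[X]), add_pow, one_pow, mul_one, finsetSum_coeff,
          coeff_mul_natCast, mul_comm]
    _ = ∑ s ∈ range (N + r + 1), (N.choose s : R) * (Q ^ s).coeff r :=
        sum_subset (range_subset_range.mpr (by omega)) fun s _ hs => by
          rw [Nat.choose_eq_zero_of_lt (by simpa using hs), Nat.cast_zero, zero_mul]
    _ = ∑ s ∈ Icc 1 r, (N.choose s : R) * (Q ^ s).coeff r :=
        (sum_subset (fun s hs => by simp only [mem_Icc, mem_range] at hs ⊢; omega) hvanish).symm

theorem coeff_sum_C_mul_X_pow_succ_pow (r s : ℕ) (a : Fin r → R) :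
    ((∑ j : Fin r, C (a j) * X ^ ((j : ℕ) + 1)) ^ s).coeff r
      = ∑ ℓ ∈ (Nat.antidiagonalTuple r s).filter
          (fun ℓ => ∑ j : Fin r, ((j : ℕ) + 1) * ℓ j = r),
        (Nat.multinomial univ ℓ : R) * ∏ j : Fin r, a j ^ ℓ j := by
  classical
  have hterm (ℓ : Fin r → ℕ) : ∏ j : Fin r, (C (a j) * X ^ ((j : ℕ) + 1)) ^ ℓ j
      = C (∏ j : Fin r, a j ^ ℓ j) * X ^ (∑ j : Fin r, ((j : ℕ) + 1) * ℓ j) := by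
    simp only [mul_pow, prod_mul_distrib, map_prod, map_pow, ← pow_mul, prod_pow_eq_pow_sum]
  rw [sum_pow_eq_sum_piAntidiag, piAntidiag_univ_fin_eq_antidiagonalTuple, finsetSum_coeff,
    sum_filter]
  refine sum_congr rfl fun ℓ _ => ?_
  rw [hterm, ← C_eq_natCast, ← mul_assoc, ← map_mul, coeff_C_mul_X_pow]
  simp only [eq_comm (a := r)]

end CommSemiring

section CommRing

variable {R : Type*} [CommRing R]

theorem coeff_pow_congr {p q : R[X]} {r : ℕ} (h : ∀ i ≤ r, p.coeff i = q.coeff i) (s : ℕ) :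
    (p ^ s).coeff r = (q ^ s).coeff r := by
  have hdvd : X ^ (r + 1) ∣ p ^ s - q ^ s :=
    (X_pow_dvd_iff.mpr fun i hi => by rw [coeff_sub, h i (by omega), sub_self]).trans
      (sub_dvd_pow_sub_pow p q s)
  simpa [sub_eq_zero] using X_pow_dvd_iff.mp hdvd r r.lt_succ_self

theorem coeff_pow_eq_sum_multinomial {Q : R[X]} (hQ : Q.coeff 0 = 0) (r s : ℕ) :
    (Q ^ s).coeff r
      = ∑ ℓ ∈ (Nat.antidiagonalTuple r s).filter
          (fun ℓ => ∑ j : Fin r, ((j : ℕ) + 1) * ℓ j = r),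
        (Nat.multinomial univ ℓ : R) * ∏ j : Fin r, Q.coeff ((j : ℕ) + 1) ^ ℓ j := by
  rw [← coeff_sum_C_mul_X_pow_succ_pow]
  refine coeff_pow_congr (fun i hi => ?_) s
  rw [finsetSum_coeff]
  simp only [coeff_C_mul_X_pow]
  rcases i with _ | i
  · simp [hQ]
  · rw [sum_eq_single ⟨i, by omega⟩ (fun j _ hj => if_neg fun h => hj (Fin.ext (by simp; omega)))
      (by simp)]
    simp

end CommRing

theorem coeff_pow_div_coeff_zero_pow {K : Type*} [Field K] {P : K[X]} (hP : P.coeff 0 ≠ 0)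
    {r : ℕ} (hr : 1 ≤ r) (N : ℕ) :
    (P ^ N).coeff r / P.coeff 0 ^ N
      = ∑ s ∈ Icc 1 r, (N.choose s : K) *
          ∑ ℓ ∈ (Nat.antidiagonalTuple r s).filter
              (fun ℓ => ∑ j : Fin r, ((j : ℕ) + 1) * ℓ j = r),
            (Nat.multinomial univ ℓ : K) *
              ∏ j : Fin r, (P.coeff ((j : ℕ) + 1) / P.coeff 0) ^ ℓ j := by
  set c := P.coeff 0
  set Q := C c⁻¹ * (P - C c)
  have hQ0 : Q.coeff 0 = 0 := by simp [Q, c]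
  have hQ (j : ℕ) : Q.coeff (j + 1) = P.coeff (j + 1) / c := by
    simp [Q, div_eq_inv_mul]
  have hpow : P ^ N = C (c ^ N) * (1 + Q) ^ N := by
    rw [C_pow, ← mul_pow, mul_add, mul_one, ← mul_assoc, ← C_mul, mul_inv_cancel₀ hP, C_1,
      one_mul, add_sub_cancel]
  rw [hpow, coeff_C_mul, mul_div_cancel_left₀ _ (pow_ne_zero N hP),
    coeff_one_add_pow hQ0 hr]
  simp only [coeff_pow_eq_sum_multinomial hQ0, hQ]

theorem reverse_pow {R : Type*} [Semiring R] [NoZeroDivisors R] (p : R[X]) (n : ℕ) :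
    (p ^ n).reverse = p.reverse ^ n := by
  induction n with
  | zero => simpa using reverse_C (1 : R)
  | succ n ih => rw [pow_succ, reverse_mul_of_domain, ih, pow_succ]

end Polynomial

open Polynomial

theorem codegCoeff_eq_coeff_reverse {p : ℚ[X]} {d : ℕ} (hd : p.natDegree = d) (r : ℕ) :
    codegCoeff p d r = p.reverse.coeff r := by
  rw [coeff_reverse, hd, codegCoeff]
  split_ifs with hrd
  · rw [revAt_le hrd]
  · rw [revAt_eq_self_of_lt (by omega), coeff_eq_zero_of_natDegree_lt (by omega)]

/-- Powers of two-level polynomials: explicit coefficient formula for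
`f_q(n)^{h(q)} / c^{h(q)}` in codegree `1 ≤ r ≤ e`. -/
theorem stmt11 (g h : ℕ → ℕ) (e : ℕ) (c : ℚ) (hc0 : c ≠ 0)
    (f : ℕ → Polynomial ℚ) (φ : ℕ → Polynomial ℚ)
    (hdeg : ∀ q, (f q).natDegree = g q)
    (hlead : ∀ q, (f q).coeff (g q) = c)
    (hcoeff : ∀ q, ∀ r ≤ e, codegCoeff (f q) (g q) r = (φ r).eval (q : ℚ)) :
    ∀ q, ∀ r, 1 ≤ r → r ≤ e →
      codegCoeff ((f q) ^ (h q)) (g q * h q) r / c ^ (h q)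
        = ∑ s ∈ Finset.Icc 1 r,
            ((h q).choose s : ℚ) *
              ∑ ℓ ∈ (Finset.Nat.antidiagonalTuple r s).filter
                  (fun ℓ => ∑ j : Fin r, ((j : ℕ) + 1) * ℓ j = r),
                (Nat.multinomial Finset.univ ℓ : ℚ) *
                  ∏ j : Fin r, ((φ ((j : ℕ) + 1)).eval (q : ℚ) / c) ^ ℓ j := by
  intro q r hr he
  have hrev0 : (f q).reverse.coeff 0 = c := by
    rw [coeff_zero_reverse, leadingCoeff, hdeg, hlead]
  have hrev (j : Fin r) :
      (f q).reverse.coeff ((j : ℕ) + 1) = (φ ((j : ℕ) + 1)).eval (q : ℚ) := by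
    rw [← codegCoeff_eq_coeff_reverse (hdeg q), hcoeff q _ (by omega)]
  have hdegpow : ((f q) ^ (h q)).natDegree = g q * h q := by
    rw [natDegree_pow, hdeg, mul_comm]
  rw [codegCoeff_eq_coeff_reverse hdegpow, reverse_pow, ← hrev0,
    coeff_pow_div_coeff_zero_pow (hrev0 ▸ hc0) hr]
  simp only [hrev]
end

section
/- For any finite graph G = (V, E), the chromatic polynomial satisfies χ_G(n) = Σ_{b ∈ L(G)} μ(0̂, b) · n^{|V| − rank(b)}, where L(G) is the bond lattice of G, μ is its Möbius function, and rank(b) is the number of vertices minus the number of connected components of the bond b. -/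
/-!
A colouring `f : V → Fin n` determines a bond `κ f`: the partition of `V` into the connected
components of the subgraph of monochromatic edges. Since the blocks of a bond `b` are connected,
`b ≤ κ f` holds exactly when `f` is constant on the blocks of `b`; and `κ f = 0̂` exactly when `f`
is proper. The defining recurrence of `μ` then turns the count of proper colourings into
`∑_f [κ f = 0̂] = ∑_f ∑_{b ≤ κ f} μ b = ∑_b μ b · #{f constant on the blocks of b}`,
and the last count is `n ^ #(blocks of b)`.
-/

open Finset

namespace Finpartition

theorem forall_card_eq_one_iff_eq_bot {α : Type*} [DecidableEq α] {s : Finset α}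
    (P : Finpartition s) : (∀ p ∈ P.parts, #p = 1) ↔ P = ⊥ := by
  refine ⟨fun h => le_antisymm (fun p hp => ?_) bot_le, ?_⟩
  · obtain ⟨a, rfl⟩ := card_eq_one.1 (h p hp)
    exact ⟨{a}, mem_bot_iff.2 ⟨a, P.le hp (mem_singleton_self a), rfl⟩, le_rfl⟩
  · rintro rfl p hp
    obtain ⟨a, -, rfl⟩ := mem_bot_iff.1 hp
    exact card_singleton a

variable {V : Type*} [Fintype V] [DecidableEq V]

noncomputable def funsConstOnPartsEquiv (b : Finpartition (univ : Finset V)) (α : Type*) :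
    {f : V → α // ∀ p ∈ b.parts, ∀ u ∈ p, ∀ v ∈ p, f u = f v} ≃ (b.parts → α) where
  toFun f p := f.1 (b.nonempty_of_mem_parts p.2).choose
  invFun g := ⟨fun v => g ⟨b.part v, b.part_mem.2 (mem_univ v)⟩, fun p hp u hu v hv =>
      congrArg g (Subtype.ext ((b.part_eq_of_mem hp hu).trans (b.part_eq_of_mem hp hv).symm))⟩
  left_inv f := by
    have hv (v : V) := b.part_mem.2 (mem_univ v)
    exact Subtype.ext (funext fun v => f.2 _ (hv v) _
      (b.nonempty_of_mem_parts (hv v)).choose_spec _ (b.mem_part (mem_univ v)))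
  right_inv g := funext fun p =>
    congrArg g (Subtype.ext (b.part_eq_of_mem p.2 (b.nonempty_of_mem_parts p.2).choose_spec))

theorem card_funsConstOnParts (b : Finpartition (univ : Finset V)) (α : Type*) :
    Nat.card {f : V → α // ∀ p ∈ b.parts, ∀ u ∈ p, ∀ v ∈ p, f u = f v} =
      Nat.card α ^ #b.parts := by
  rw [Nat.card_congr (b.funsConstOnPartsEquiv α), Nat.card_fun, Nat.card_eq_finsetCard]

end Finpartition

namespace SimpleGraph

variable {V α : Type*}

def monochromatic (G : SimpleGraph V) (f : V → α) : SimpleGraph V where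
  Adj u v := G.Adj u v ∧ f u = f v
  symm := ⟨fun _ _ h => ⟨h.1.symm, h.2.symm⟩⟩
  loopless := ⟨fun u h => G.loopless.irrefl u h.1⟩

theorem monochromatic_le (G : SimpleGraph V) (f : V → α) : G.monochromatic f ≤ G :=
  fun _ _ h => h.1

theorem monochromatic_eq_bot_iff (G : SimpleGraph V) (f : V → α) :
    G.monochromatic f = ⊥ ↔ ∀ u v, G.Adj u v → f u ≠ f v := by
  simp [SimpleGraph.ext_iff, funext_iff, monochromatic]

theorem Reachable.apply_eq_of_monochromatic {G : SimpleGraph V} {f : V → α} {u v : V}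
    (h : (G.monochromatic f).Reachable u v) : f u = f v := by
  obtain ⟨w⟩ := h
  induction w with
  | nil => rfl
  | cons h _ ih => exact h.2.trans ih

theorem induce_monochromatic_of_eq {G : SimpleGraph V} {f : V → α} {s : Set V}
    (hs : ∀ u ∈ s, ∀ v ∈ s, f u = f v) : (G.monochromatic f).induce s = G.induce s := by
  ext ⟨u, hu⟩ ⟨v, hv⟩
  simp [monochromatic, hs u hu v hv]

variable [Fintype V] [DecidableEq V]

noncomputable def componentPartition (H : SimpleGraph V) : Finpartition (univ : Finset V) :=
  @Finpartition.ofSetoid _ _ _ H.reachableSetoid (Classical.decRel _)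

theorem mem_part_componentPartition {H : SimpleGraph V} {u v : V} :
    v ∈ H.componentPartition.part u ↔ H.Reachable u v :=
  @Finpartition.mem_part_ofSetoid_iff_rel _ _ _ _ _ (Classical.decRel _) _

theorem connected_induce_of_mem_componentPartition {H : SimpleGraph V} {p : Finset V}
    (hp : p ∈ H.componentPartition.parts) : (H.induce p).Connected := by
  obtain ⟨a, ha⟩ := H.componentPartition.nonempty_of_mem_parts hp
  have hsupp : (p : Set V) = (H.connectedComponentMk a).supp := by
    ext v
    rw [← H.componentPartition.part_eq_of_mem hp ha, mem_coe, mem_part_componentPartition,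
      ConnectedComponent.mem_supp_iff, ConnectedComponent.eq, reachable_comm]
  exact hsupp ▸ (H.connectedComponentMk a).connected_toSimpleGraph

theorem le_componentPartition_of_connected {H : SimpleGraph V}
    {b : Finpartition (univ : Finset V)} (hb : ∀ p ∈ b.parts, (H.induce p).Connected) :
    b ≤ H.componentPartition := by
  intro p hp
  obtain ⟨a, ha⟩ := b.nonempty_of_mem_parts hp
  refine ⟨H.componentPartition.part a, H.componentPartition.part_mem.2 (mem_univ a),
    fun v hv => ?_⟩
  exact mem_part_componentPartition.2 <|
    ((hb p hp).preconnected ⟨a, ha⟩ ⟨v, hv⟩).map (Embedding.induce (p : Set V)).toHom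

theorem componentPartition_eq_bot_iff (H : SimpleGraph V) :
    H.componentPartition = ⊥ ↔ H = ⊥ := by
  rw [← Finpartition.forall_card_eq_one_iff_eq_bot]
  constructor
  · intro h
    ext u v
    refine ⟨fun huv => ?_, fun h => h.elim⟩
    have hp := h _ (H.componentPartition.part_mem.2 (mem_univ u))
    have hu := H.componentPartition.mem_part (mem_univ u)
    have hv := mem_part_componentPartition.2 huv.reachable
    exact absurd (card_le_one.1 hp.le _ hv _ hu) huv.ne'
  · rintro rfl p hp
    obtain ⟨a, ha⟩ := (⊥ : SimpleGraph V).componentPartition.nonempty_of_mem_parts hp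
    refine card_eq_one.2 ⟨a, eq_singleton_iff_unique_mem.2 ⟨ha, fun v hv => ?_⟩⟩
    rw [← (⊥ : SimpleGraph V).componentPartition.part_eq_of_mem hp ha,
      mem_part_componentPartition, reachable_bot] at hv
    exact hv.symm

theorem le_componentPartition_monochromatic_iff {G : SimpleGraph V} {f : V → α}
    {b : Finpartition (univ : Finset V)} (hb : ∀ p ∈ b.parts, (G.induce p).Connected) :
    b ≤ (G.monochromatic f).componentPartition ↔
      ∀ p ∈ b.parts, ∀ u ∈ p, ∀ v ∈ p, f u = f v := by
  refine ⟨fun hle p hp u hu v hv => ?_,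
    fun h => le_componentPartition_of_connected fun p hp => ?_⟩
  · obtain ⟨t, ht, hpt⟩ := hle hp
    rw [← (G.monochromatic f).componentPartition.part_eq_of_mem ht (hpt hu)] at hpt
    exact (mem_part_componentPartition.1 (hpt hv)).apply_eq_of_monochromatic
  · rw [induce_monochromatic_of_eq (h p hp)]
    exact hb p hp

end SimpleGraph

open SimpleGraph

/-- Rota's Möbius-inversion formula for the chromatic polynomial: summing over the bond
lattice `B` (partitions of `V` all of whose blocks induce connected subgraphs), for any
function `μ` satisfying the defining Möbius recurrence on `B` (with `0̂` the partition
into singletons), the number of proper `n`-colorings equals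
`Σ_{b ∈ B} μ(0̂,b) n^{|V| - rank b}` where `|V| - rank b` is the number of blocks of `b`. -/
theorem stmt12 {V : Type*} [Fintype V] [DecidableEq V] (G : SimpleGraph V)
    (B : Finset (Finpartition (Finset.univ : Finset V)))
    (hB : ∀ P : Finpartition (Finset.univ : Finset V),
      P ∈ B ↔ ∀ p ∈ P.parts, (SimpleGraph.induce (↑p : Set V) G).Connected)
    (μ : Finpartition (Finset.univ : Finset V) → ℤ)
    (hμ : ∀ b ∈ B, ∑ a ∈ B.filter (fun a => ∀ p ∈ a.parts, ∃ t ∈ b.parts, p ⊆ t), μ a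
        = if ∀ p ∈ b.parts, p.card = 1 then 1 else 0)
    (n : ℕ) :
    (Nat.card {f : V → Fin n // ∀ u v, G.Adj u v → f u ≠ f v} : ℤ)
      = ∑ b ∈ B, μ b * (n : ℤ) ^ b.parts.card := by
  classical
  have hκ (f : V → Fin n) : (G.monochromatic f).componentPartition ∈ B :=
    (hB _).2 fun p hp => (connected_induce_of_mem_componentPartition hp).mono
      (comap_monotone _ (monochromatic_le G f))
  calc (Nat.card {f : V → Fin n // ∀ u v, G.Adj u v → f u ≠ f v} : ℤ)
      = ∑ f : V → Fin n,
          if ∀ p ∈ (G.monochromatic f).componentPartition.parts, #p = 1 then 1 else 0 := by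
        simp only [Finpartition.forall_card_eq_one_iff_eq_bot, componentPartition_eq_bot_iff,
          monochromatic_eq_bot_iff, sum_boole, Nat.card_eq_fintype_card, Fintype.card_subtype]
    _ = ∑ f : V → Fin n, ∑ a ∈ B with ∀ p ∈ a.parts, ∀ u ∈ p, ∀ v ∈ p, f u = f v, μ a := by
        refine sum_congr rfl fun f _ => ?_
        rw [← hμ _ (hκ f)]
        exact sum_congr (filter_congr fun a ha =>
          le_componentPartition_monochromatic_iff ((hB a).1 ha)) fun _ _ => rfl
    _ = ∑ a ∈ B, ∑ f : V → Fin n with ∀ p ∈ a.parts, ∀ u ∈ p, ∀ v ∈ p, f u = f v, μ a :=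
        sum_comm' fun _ _ => by simp only [mem_filter, mem_univ, true_and, and_comm]
    _ = ∑ b ∈ B, μ b * (n : ℤ) ^ b.parts.card := by
        refine sum_congr rfl fun a _ => ?_
        rw [sum_const, nsmul_eq_mul, mul_comm, ← Fintype.card_subtype,
          ← Nat.card_eq_fintype_card, Finpartition.card_funsConstOnParts, Nat.card_fin]
        push_cast
        rfl
end
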